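/- arXiv:1708.03476 — 3 statements merged into one kernel-verified Lean document; each statement's English description precedes it below -/
import Mathlib

section
/- Let G be an infinite group generated by S, let H ≤ G with 1 < [G : H] < ∞, and suppose [x₁,…,xₙ] is a Hamilton cycle of the Schreier graph of left cosets of H and a := x₁⋯xₙ generates H (so H ≅ ℤ). Then every element of G has a unique representation a^i · x₁⋯x_j with i ∈ ℤ and 0 ≤ j < n; in particular the Cayley graph Γ(G,S) contains a Hamilton double ray. -/
/-!
As `H = ⟨a⟩` has finite index in the infinite group `G`, `a` has infinite order, so `aⁱ`
determines `i`; since the Hamilton cycle of the Schreier graph meets each coset of `H` in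
exactly one `x₁⋯x_j`, every element is uniquely `aⁱ · x₁⋯x_j`. Enumerating these elements by
`k = i n + j` runs through the cycle once for each power of `a`, every step multiplying by some
`x_{j+1} ∈ S` (for `j = n - 1` the step lands on `aⁱ⁺¹ = aⁱ · x₁⋯xₙ`): a Hamilton double ray.
-/

open Subgroup

section

variable {G : Type*} [Group G]

theorem not_isOfFinOrder_of_zpowers_index_ne_zero [Infinite G] {a : G}
    (hindex : (zpowers a).index ≠ 0) : ¬IsOfFinOrder a := by
  rw [← infinite_zpowers, ← Set.infinite_coe_iff]
  by_contra hfin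
  have : Finite G := (finite_iff_finite_and_finiteIndex (H := zpowers a)).2
    ⟨not_infinite_iff_finite.1 hfin, finiteIndex_iff.2 hindex⟩
  exact not_finite G

theorem existsUnique_zpow_mul_of_existsUnique_mul_inv_mem {ι : Type*} {a : G}
    (ha : ¬IsOfFinOrder a) (t : ι → G) (ht : ∀ g, ∃! i, g * (t i)⁻¹ ∈ zpowers a) (g : G) :
    ∃! p : ℤ × ι, g = a ^ p.1 * t p.2 := by
  obtain ⟨i, ⟨k, hk⟩, hi_uniq⟩ := ht g
  refine ⟨(k, i), eq_mul_of_mul_inv_eq hk.symm, fun ⟨k', i'⟩ (hg : g = _) ↦ ?_⟩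
  have hi' : i' = i := hi_uniq i' ⟨k', by simp [hg]⟩
  subst hi'
  have hk' : a ^ k' = a ^ k := by simp only [hk, hg, mul_inv_cancel_right]
  exact Prod.ext (injective_zpow_iff_not_isOfFinOrder.2 ha hk') rfl

variable (xs : List G)

def periodicWalk (p : ℤ × Fin xs.length) : G := xs.prod ^ p.1 * (xs.take p.2).prod

theorem periodicWalk_divModEquiv_step_mem [NeZero xs.length] (k : ℤ) :
    (periodicWalk xs (Int.divModEquiv _ k))⁻¹ * periodicWalk xs (Int.divModEquiv _ (k + 1)) ∈
      xs := by
  set e := Int.divModEquiv xs.length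
  obtain ⟨⟨q, r⟩, rfl⟩ := e.symm.surjective k
  by_cases hr : (r : ℕ) + 1 < xs.length
  · have hsucc : e.symm (q, r) + 1 = e.symm (q, ⟨r + 1, hr⟩) := by
      simp only [e, Int.divModEquiv_symm_apply, Nat.cast_add, Nat.cast_one]; ring
    rw [hsucc, e.apply_symm_apply, e.apply_symm_apply]
    simp [periodicWalk, List.prod_take_succ _ _ r.isLt, mul_assoc]
  · have hr : (r : ℕ) + 1 = xs.length := by omega
    have hsucc : e.symm (q, r) + 1 = e.symm (q + 1, 0) := by
      simp only [e, Int.divModEquiv_symm_apply, Fin.val_zero, Nat.cast_zero, add_zero, ← hr]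
      push_cast; ring
    have hprod : xs.prod = (xs.take r).prod * xs[(r : ℕ)] := by
      rw [← List.prod_take_succ, hr, List.take_length]
    rw [hsucc, e.apply_symm_apply, e.apply_symm_apply]
    simp [periodicWalk, zpow_add_one, hprod, mul_assoc]

end

theorem stmt_11_general {G : Type*} [Group G] [Infinite G] (S : Set G)
    (H : Subgroup G) (hfin : H.index ≠ 0)
    (xs : List G) (hxs : ∀ x ∈ xs, x ∈ S)
    (a : G) (ha : a = xs.prod) (hgenH : Subgroup.zpowers a = H)
    (hham : ∀ g : G, ∃! j : Fin xs.length, g * ((xs.take j).prod)⁻¹ ∈ H) :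
    (∀ g : G, ∃! p : ℤ × Fin xs.length,
        g = a ^ p.1 * (xs.take p.2).prod) ∧
      ∃ f : ℤ ≃ G, ∀ i : ℤ, (f i)⁻¹ * f (i + 1) ∈ S := by
  subst hgenH ha
  have hrep := existsUnique_zpow_mul_of_existsUnique_mul_inv_mem
    (not_isOfFinOrder_of_zpowers_index_ne_zero hfin) _ hham
  refine ⟨hrep, ?_⟩
  obtain ⟨j, -⟩ := hham 1
  have : NeZero xs.length := .of_pos j.pos
  have hbij : Function.Bijective (periodicWalk xs) :=
    (Function.bijective_iff_existsUnique _).2 fun g ↦ by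
      simpa only [periodicWalk, eq_comm] using hrep g
  exact ⟨(Int.divModEquiv _).trans (.ofBijective _ hbij),
    fun k ↦ hxs _ (periodicWalk_divModEquiv_step_mem xs k)⟩

/-- Factor group lemma via Schreier graphs, infinite case: if `G` is infinite,
`1 < [G : H] < ∞`, the partial products of `x₁,…,xₙ ∈ S` visit every coset of `H`
exactly once (a Hamilton cycle of the Schreier graph) and `a = x₁⋯xₙ` generates `H`,
then every element of `G` is uniquely of the form `aⁱ · x₁⋯x_j` with `i ∈ ℤ`,
`0 ≤ j < n`; in particular `Γ(G,S)` contains a Hamilton double ray (an enumeration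
of `G` by `ℤ` with consecutive steps in `S`). -/
theorem stmt_11 {G : Type*} [Group G] [Infinite G] (S : Set G) (hSfin : S.Finite)
    (hsym : ∀ s ∈ S, s⁻¹ ∈ S) (hgen : Subgroup.closure S = ⊤)
    (H : Subgroup G) (hind : 1 < H.index) (hfin : H.index ≠ 0)
    (xs : List G) (hxs : ∀ x ∈ xs, x ∈ S)
    (a : G) (ha : a = xs.prod) (hgenH : Subgroup.zpowers a = H)
    (hham : ∀ g : G, ∃! j : Fin xs.length, g * ((xs.take j).prod)⁻¹ ∈ H) :
    (∀ g : G, ∃! p : ℤ × Fin xs.length,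
        g = a ^ p.1 * (xs.take p.2).prod) ∧
      ∃ f : ℤ ≃ G, ∀ i : ℤ, (f i)⁻¹ * f (i + 1) ∈ S :=
  stmt_11_general S H hfin xs hxs a ha hgenH hham
end

section
/- For the free group F_r of rank r with generating set S = T ∪ T⁻¹ where T = {s₁,…,s_r, s₁²,…,s_r², s₁s₂, s₁s₃, …, s₁s_r} (standard generators s₁,…,s_r), the Cayley graph Γ(F_r, S) is 2-connected. -/
/-!
Left translations are automorphisms of a Cayley graph, so it suffices to delete the identity.
Since the `s_i` generate `F_r`, every `w ≠ 1` is the end of a path `s^{±1}, …, w` of right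
multiplications by `s_i^{±1}` that avoids `1` (a step into `1` can simply be skipped). It remains to
join the `s_i^{±1}` away from `1`: the edge `s_i²` joins `s_i⁻¹` to `s_i`, and the edge
`(s₁ s_i)⁻¹` joins `s_i` to `s₁⁻¹`.
-/

/-- The Cayley graph of a group `G` with respect to a (symmetric) set `S`. -/
def cayleyGraph (G : Type*) [Group G] (S : Set G) : SimpleGraph G where
  Adj x y := x ≠ y ∧ (x⁻¹ * y ∈ S ∨ y⁻¹ * x ∈ S)
  symm := ⟨fun _ _ h => ⟨h.1.symm, h.2.symm⟩⟩
  loopless := ⟨fun _ h => h.1 rfl⟩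

/-- The set `T = {s₁,…,s_r, s₁²,…,s_r², s₁s₂,…,s₁s_r}` of words in the free group
`F_r`, where `s₁,…,s_r` are the standard free generators (indexed by `Fin r`, with
`s₁` corresponding to the index `⟨0, hr⟩`). -/
def T (r : ℕ) (hr : 1 ≤ r) : Set (FreeGroup (Fin r)) :=
  Set.range FreeGroup.of ∪ Set.range (fun i => FreeGroup.of i * FreeGroup.of i) ∪
    { w | ∃ i : Fin r, i ≠ ⟨0, hr⟩ ∧ w = FreeGroup.of ⟨0, hr⟩ * FreeGroup.of i }

namespace SimpleGraph

variable {V : Type*} {G : SimpleGraph V}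

theorem connected_of_connected_induce_ne {u v : V} (h : (G.induce {w | w ≠ v}).Connected)
    (huv : G.Adj u v) : G.Connected := by
  have hu : u ≠ v := huv.ne
  rw [connected_iff_exists_forall_reachable]
  refine ⟨v, fun w => ?_⟩
  by_cases hw : w = v
  · rw [hw]
  · exact huv.reachable.symm.trans
      ((h.preconnected ⟨u, hu⟩ ⟨w, hw⟩).map (Embedding.induce _).toHom)

end SimpleGraph

section CayleyGraph

variable {G : Type*} [Group G] {S : Set G}

theorem cayleyGraph_induce_reachable_of_inv_mul_mem {A : Set G} {x y : A}
    (h : (x : G)⁻¹ * y ∈ S) : ((cayleyGraph G S).induce A).Reachable x y := by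
  by_cases hxy : x = y
  · rw [hxy]
  · exact SimpleGraph.Adj.reachable (G := (cayleyGraph G S).induce A)
      ⟨fun h => hxy (Subtype.ext h), Or.inl h⟩

@[simps!]
def cayleyGraph.mulLeftIso (g : G) : cayleyGraph G S ≃g cayleyGraph G S where
  toEquiv := Equiv.mulLeft g
  map_rel_iff' := by simp [cayleyGraph, mul_assoc]

theorem cayleyGraph_induce_ne_connected_iff (g : G) :
    ((cayleyGraph G S).induce {w | w ≠ g}).Connected ↔
      ((cayleyGraph G S).induce {w | w ≠ 1}).Connected := by
  refine ((cayleyGraph.mulLeftIso g).induce ⟨fun w hw => ?_, (Equiv.injective _).injOn,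
    fun w hw => ⟨g⁻¹ * w, ?_, ?_⟩⟩).connected_iff.symm <;>
    simp_all [inv_mul_eq_one, eq_comm (a := g)]

theorem cayleyGraph_induce_ne_one_connected {X : Set G} (hX : Subgroup.closure X = ⊤)
    (hXS : X ∪ X⁻¹ ⊆ S) (u : {w : G | w ≠ 1})
    (hbase : ∀ x (hx : x ≠ 1), x ∈ X ∪ X⁻¹ →
      ((cayleyGraph G S).induce {w | w ≠ 1}).Reachable ⟨x, hx⟩ u) :
    ((cayleyGraph G S).induce {w | w ≠ 1}).Connected := by
  rw [SimpleGraph.connected_iff_exists_forall_reachable]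
  refine ⟨u, fun ⟨w, hw⟩ => ?_⟩
  suffices ∀ w (hw : w ≠ 1), ((cayleyGraph G S).induce {w | w ≠ 1}).Reachable ⟨w, hw⟩ u from
    (this w hw).symm
  intro w
  induction (hX ▸ Subgroup.mem_top w : w ∈ Subgroup.closure X) using
    Subgroup.closure_induction_right with
  | one => exact fun h => absurd rfl h
  | mul_right x _ y hy ih =>
    intro hxy
    by_cases hx : x = 1
    · subst hx
      simp only [one_mul] at hxy ⊢
      exact hbase y hxy (Or.inl hy)
    · refine .trans (cayleyGraph_induce_reachable_of_inv_mul_mem ?_) (ih hx)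
      simpa using hXS (Or.inr (Set.inv_mem_inv.mpr hy))
  | mul_inv_cancel x _ y hy ih =>
    intro hxy
    by_cases hx : x = 1
    · subst hx
      simp only [one_mul] at hxy ⊢
      exact hbase y⁻¹ hxy (Or.inr (Set.inv_mem_inv.mpr hy))
    · refine .trans (cayleyGraph_induce_reachable_of_inv_mul_mem ?_) (ih hx)
      simpa using hXS (Or.inl hy)

end CayleyGraph

section FreeGroup

open FreeGroup

variable {r : ℕ} (hr : 1 ≤ r)

theorem of_mem_T (i : Fin r) : of i ∈ T r hr := Or.inl (Or.inl ⟨i, rfl⟩)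

theorem of_mul_self_mem_T (i : Fin r) : of i * of i ∈ T r hr := Or.inl (Or.inr ⟨i, rfl⟩)

theorem of_zero_mul_of_mem_T {i : Fin r} (hi : i ≠ ⟨0, hr⟩) : of ⟨0, hr⟩ * of i ∈ T r hr :=
  Or.inr ⟨i, hi, rfl⟩

theorem cayleyGraph_T_induce_ne_one_connected :
    ((cayleyGraph (FreeGroup (Fin r)) (T r hr ∪ (T r hr)⁻¹)).induce {w | w ≠ 1}).Connected := by
  set P := (cayleyGraph (FreeGroup (Fin r)) (T r hr ∪ (T r hr)⁻¹)).induce {w | w ≠ 1}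
  have reach_of (i : Fin r) : P.Reachable ⟨of i, of_ne_one i⟩ ⟨of ⟨0, hr⟩, of_ne_one _⟩ := by
    by_cases hi : i = ⟨0, hr⟩
    · rw [hi]
    have to_inv :
        P.Reachable ⟨of i, of_ne_one i⟩ ⟨(of ⟨0, hr⟩)⁻¹, inv_ne_one.mpr (of_ne_one _)⟩ :=
      cayleyGraph_induce_reachable_of_inv_mul_mem <| by
        rw [← mul_inv_rev]; exact Or.inr (Set.inv_mem_inv.mpr (of_zero_mul_of_mem_T hr hi))
    exact to_inv.trans <| cayleyGraph_induce_reachable_of_inv_mul_mem <| by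
      rw [inv_inv]; exact Or.inl (of_mul_self_mem_T hr _)
  refine cayleyGraph_induce_ne_one_connected (closure_range_of _) ?_ ⟨of ⟨0, hr⟩, of_ne_one _⟩ ?_
  · rintro _ (⟨i, rfl⟩ | ⟨i, hi⟩)
    · exact Or.inl (of_mem_T hr i)
    · exact Or.inr (by simpa [Set.mem_inv, ← hi] using of_mem_T hr i)
  · rintro x _ (⟨i, rfl⟩ | ⟨i, hi⟩)
    · exact reach_of i
    · obtain rfl : x = (of i)⁻¹ := by rw [hi, inv_inv]
      refine .trans (cayleyGraph_induce_reachable_of_inv_mul_mem ?_) (reach_of i)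
      rw [inv_inv]; exact Or.inl (of_mul_self_mem_T hr i)

end FreeGroup

/-- For the free group `F_r` (`r ≥ 1`) with generating set `S = T ∪ T⁻¹`, the Cayley
graph `Γ(F_r, S)` is 2-connected: it is connected and deleting any single vertex
leaves it connected. -/
theorem stmt_15 (r : ℕ) (hr : 1 ≤ r) :
    (cayleyGraph (FreeGroup (Fin r)) (T r hr ∪ (T r hr)⁻¹)).Connected ∧
      ∀ v : FreeGroup (Fin r),
        (SimpleGraph.induce {w | w ≠ v}
          (cayleyGraph (FreeGroup (Fin r)) (T r hr ∪ (T r hr)⁻¹))).Connected := by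
  have punctured := cayleyGraph_T_induce_ne_one_connected hr
  refine ⟨SimpleGraph.connected_of_connected_induce_ne punctured (u := FreeGroup.of ⟨0, hr⟩) ?_,
    fun v => (cayleyGraph_induce_ne_connected_iff v).mpr punctured⟩
  exact ⟨FreeGroup.of_ne_one _,
    Or.inl (by simpa using Or.inr (Set.inv_mem_inv.mpr (of_mem_T hr _)))⟩
end

section
/- In the group G = ⟨a, b, c ∣ a², b², c², (ab)², (abc)^m⟩ with m ≥ 2, the element ac has infinite order. -/
/-- The relators of the presentation `⟨a, b, c ∣ a², b², c², (ab)², (abc)^m⟩`. -/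
def rels (m : ℕ) : Set (FreeGroup (Fin 3)) :=
  { (FreeGroup.of 0) ^ 2, (FreeGroup.of 1) ^ 2, (FreeGroup.of 2) ^ 2,
    (FreeGroup.of 0 * FreeGroup.of 1) ^ 2,
    (FreeGroup.of 0 * FreeGroup.of 1 * FreeGroup.of 2) ^ m }

/-!
`G` acts on `ℂ` by isometries: `a` is the half-turn `w ↦ 1 - w`, `b` the reflection
`w ↦ 1 - w̄` in the line `Re w = 1/2`, and `c` the reflection `w ↦ ζ w̄` for a primitive `m`-th
root of unity `ζ`. Then `ab` is complex conjugation and `abc` is multiplication by `ζ⁻¹`, so every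
relator acts trivially. But `ac` is a glide reflection: its square is the translation by
`1 - ζ ≠ 0`, which has infinite order.
-/

theorem Equiv.not_isOfFinOrder_addRight {A : Type*} [AddGroup A] [IsAddTorsionFree A] {t : A}
    (ht : t ≠ 0) : ¬ IsOfFinOrder (Equiv.addRight t) := by
  rw [isOfFinOrder_iff_pow_eq_one]
  rintro ⟨n, hn, hpow⟩
  have hnt : n • t = 0 := by
    simpa using DFunLike.congr_fun ((Equiv.nsmul_addRight t n).symm.trans hpow) 0
  exact ht ((nsmul_eq_zero_iff_right hn.ne').mp hnt)

theorem Function.Involutive.toPerm_sq {α : Type*} {f : α → α} (h : Function.Involutive f) :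
    h.toPerm f ^ 2 = 1 :=
  Equiv.ext fun x => h x

open ComplexConjugate in
theorem Circle.conj_coe (ζ : Circle) : conj (ζ : ℂ) = (ζ : ℂ)⁻¹ :=
  (Circle.coe_inv_eq_conj ζ).symm

namespace PlaneIsometry

open ComplexConjugate

noncomputable def halfTurn : Equiv.Perm ℂ :=
  Function.Involutive.toPerm (fun w => 1 - w) fun w => sub_sub_cancel 1 w

noncomputable def reflHalf : Equiv.Perm ℂ :=
  Function.Involutive.toPerm (fun w => 1 - conj w) fun w => by simp

noncomputable def reflLine (ζ : Circle) : Equiv.Perm ℂ :=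
  Function.Involutive.toPerm (fun w => ζ * conj w) fun w => by
    simp [Circle.conj_coe, Circle.coe_ne_zero]

@[simp] theorem halfTurn_apply (w : ℂ) : halfTurn w = 1 - w := rfl
@[simp] theorem reflHalf_apply (w : ℂ) : reflHalf w = 1 - conj w := rfl
@[simp] theorem reflLine_apply (ζ : Circle) (w : ℂ) : reflLine ζ w = ζ * conj w := rfl

theorem halfTurn_mul_reflHalf_sq : (halfTurn * reflHalf) ^ 2 = 1 := by
  ext w
  simp [sq]

theorem halfTurn_mul_reflHalf_mul_reflLine (ζ : Circle) :
    halfTurn * reflHalf * reflLine ζ = MulAction.toPermHom Circle ℂ ζ⁻¹ := by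
  ext w
  simp [Circle.smul_def, Circle.conj_coe]

theorem halfTurn_mul_reflLine_sq (ζ : Circle) :
    (halfTurn * reflLine ζ) ^ 2 = Equiv.addRight (1 - (ζ : ℂ)) := by
  ext w
  simp [sq, Circle.conj_coe, mul_sub, ← mul_assoc, Circle.coe_ne_zero]
  ring

theorem not_isOfFinOrder_halfTurn_mul_reflLine {ζ : Circle} (hζ : ζ ≠ 1) :
    ¬ IsOfFinOrder (halfTurn * reflLine ζ) := fun h => by
  have ht : (1 : ℂ) - ζ ≠ 0 := sub_ne_zero.mpr fun h1 => hζ (Circle.ext h1.symm)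
  exact Equiv.not_isOfFinOrder_addRight ht (halfTurn_mul_reflLine_sq ζ ▸ h.pow)

theorem lift_eq_one_of_mem_rels {m : ℕ} {ζ : Circle} (hζ : ζ ^ m = 1) :
    ∀ r ∈ rels m, FreeGroup.lift ![halfTurn, reflHalf, reflLine ζ] r = 1 := by
  rintro r (rfl | rfl | rfl | rfl | rfl) <;>
    simp only [map_pow, map_mul, FreeGroup.lift_apply_of, Matrix.cons_val]
  · exact Function.Involutive.toPerm_sq _
  · exact Function.Involutive.toPerm_sq _
  · exact Function.Involutive.toPerm_sq _
  · exact halfTurn_mul_reflHalf_sq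
  · rw [halfTurn_mul_reflHalf_mul_reflLine, ← map_pow, inv_pow, hζ, inv_one, map_one]

end PlaneIsometry

open PlaneIsometry in
/-- In `G = ⟨a, b, c ∣ a², b², c², (ab)², (abc)^m⟩` with `m ≥ 2`, the element `ac`
has infinite order. -/
theorem stmt_18 (m : ℕ) (hm : 2 ≤ m) :
    ¬ IsOfFinOrder ((PresentedGroup.of 0 : PresentedGroup (rels m)) *
      PresentedGroup.of 2) := by
  have : NeZero m := ⟨by omega⟩
  obtain ⟨ζ, hζ⟩ := HasEnoughRootsOfUnity.exists_primitiveRoot Circle m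
  intro h
  have hρ := (PresentedGroup.toGroup (lift_eq_one_of_mem_rels hζ.pow_eq_one)).isOfFinOrder h
  rw [map_mul, PresentedGroup.toGroup.of, PresentedGroup.toGroup.of] at hρ
  exact not_isOfFinOrder_halfTurn_mul_reflLine (hζ.ne_one hm) hρ
end
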